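/- Let q be a prime power, N a positive integer, and let P : F_q^{2N} × F_q^{2N} × F_q^{2N} → F_q be a polynomial function of total degree at most D in which every monomial, after reduction of each individual exponent to be at most q−1, is a product of powers of the coordinates of its three vector arguments. If every monomial of P has, for some argument index i ∈ {1,2,3}, total degree at most D/3 in the coordinates of the i-th argument, then the slice rank of P (as a 3-tensor on F_q^{2N}) is at most 3 times the number of exponent vectors e ∈ {0,…,q−1}^{2N} with ∑ e_j ≤ D/3. -/
import Mathlib


/-- A slice: a function on `X^k` that factors as (function of one coordinate) times
(function of the remaining coordinates). -/
def IsSlice {X F : Type*} [Field F] {k : ℕ} (T : (Fin k → X) → F) : Prop :=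
  ∃ (i : Fin k) (f : X → F) (g : ({j : Fin k // j ≠ i} → X) → F),
    ∀ v, T v = f (v i) * g (fun j => v j.1)

/-- The slice rank of a `k`-tensor on `X`. -/
noncomputable def sliceRank {X F : Type*} [Field F] {k : ℕ} (T : (Fin k → X) → F) : ℕ :=
  sInf {r | ∃ c : Fin r → ((Fin k → X) → F),
    (∀ j, IsSlice (c j)) ∧ ∀ v, T v = ∑ j, c j v}

theorem stmt15 {q N D : ℕ} (hpp : IsPrimePow q) (hN : 0 < N)
    (F : Type*) [Field F] [Fintype F] (hcard : Fintype.card F = q)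
    (c : (Fin (2 * N) → Fin q) → (Fin (2 * N) → Fin q) → (Fin (2 * N) → Fin q) → F)
    (P : (Fin (2 * N) → F) → (Fin (2 * N) → F) → (Fin (2 * N) → F) → F)
    (hP : ∀ v₁ v₂ v₃, P v₁ v₂ v₃ =
      ∑ e₁ : Fin (2 * N) → Fin q, ∑ e₂ : Fin (2 * N) → Fin q, ∑ e₃ : Fin (2 * N) → Fin q,
        c e₁ e₂ e₃ * (∏ j, v₁ j ^ (e₁ j : ℕ)) * (∏ j, v₂ j ^ (e₂ j : ℕ))
          * (∏ j, v₃ j ^ (e₃ j : ℕ)))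
    (hdeg : ∀ e₁ e₂ e₃, c e₁ e₂ e₃ ≠ 0 →
      (∑ j, ((e₁ j : ℕ) + (e₂ j : ℕ) + (e₃ j : ℕ))) ≤ D)
    (hlow : ∀ e₁ e₂ e₃, c e₁ e₂ e₃ ≠ 0 →
      ((∑ j, ((e₁ j : ℕ) : ℝ)) ≤ (D : ℝ) / 3 ∨
       (∑ j, ((e₂ j : ℕ) : ℝ)) ≤ (D : ℝ) / 3 ∨
       (∑ j, ((e₃ j : ℕ) : ℝ)) ≤ (D : ℝ) / 3)) :
    sliceRank (fun v : Fin 3 → (Fin (2 * N) → F) => P (v 0) (v 1) (v 2)) ≤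
      3 * Nat.card {e : Fin (2 * N) → Fin q //
        ((∑ j, ((e j : ℕ) : ℝ)) ≤ (D : ℝ) / 3)} := by
  classical
  let E := Fin (2 * N) → Fin q
  let X := Fin (2 * N) → F
  let low : E → Prop := fun e => (∑ j, ((e j : ℕ) : ℝ)) ≤ (D : ℝ) / 3
  let mon : X → E → F := fun x e => ∏ j, x j ^ (e j : ℕ)
  let c1 : E → E → E → F := fun e₁ e₂ e₃ => if low e₁ then c e₁ e₂ e₃ else 0
  let c2 : E → E → E → F := fun e₁ e₂ e₃ => if ¬ low e₁ ∧ low e₂ then c e₁ e₂ e₃ else 0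
  let c3 : E → E → E → F := fun e₁ e₂ e₃ => if ¬ low e₁ ∧ ¬ low e₂ then c e₁ e₂ e₃ else 0
  have hsplit : ∀ e₁ e₂ e₃, c e₁ e₂ e₃ = c1 e₁ e₂ e₃ + c2 e₁ e₂ e₃ + c3 e₁ e₂ e₃ := by
    intro e₁ e₂ e₃
    by_cases h1 : low e₁ <;> by_cases h2 : low e₂ <;> simp [c1, c2, c3, h1, h2]
  have hc3low : ∀ e₁ e₂ e₃, ¬ low e₃ → c3 e₁ e₂ e₃ = 0 := by
    intro e₁ e₂ e₃ h3
    by_cases h1 : low e₁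
    · simp [c3, h1]
    by_cases h2 : low e₂
    · simp [c3, h2]
    by_cases hc : c e₁ e₂ e₃ = 0
    · simp [c3, hc]
    rcases hlow e₁ e₂ e₃ hc with h | h | h
    · exact absurd h h1
    · exact absurd h h2
    · exact absurd h h3
  let M := {e : E // low e}
  have hMcard : Nat.card M = Fintype.card M := Nat.card_eq_fintype_card
  let sl : Fin 3 × M → (Fin 3 → X) → F := fun p v =>
    if p.1 = 0 then
      mon (v 0) p.2.1 * ∑ e₂, ∑ e₃, c1 p.2.1 e₂ e₃ * mon (v 1) e₂ * mon (v 2) e₃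
    else if p.1 = 1 then
      mon (v 1) p.2.1 * ∑ e₁, ∑ e₃, c2 e₁ p.2.1 e₃ * mon (v 0) e₁ * mon (v 2) e₃
    else
      mon (v 2) p.2.1 * ∑ e₁, ∑ e₂, c3 e₁ e₂ p.2.1 * mon (v 0) e₁ * mon (v 1) e₂
  let ι : Fin 3 × M ≃ Fin (3 * Nat.card M) :=
    ((Equiv.refl (Fin 3)).prodCongr (Fintype.equivFin M)).trans
      (finProdFinEquiv.trans (finCongr (by rw [hMcard])))
  have hslice : ∀ p : Fin 3 × M, IsSlice (sl p) := by
    rintro ⟨i, e⟩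
    fin_cases i
    · exact ⟨0, fun x => mon x e.1,
        fun w => ∑ e₂, ∑ e₃, c1 e.1 e₂ e₃ * mon (w ⟨1, by decide⟩) e₂ * mon (w ⟨2, by decide⟩) e₃,
        fun v => by simp [sl]⟩
    · exact ⟨1, fun x => mon x e.1,
        fun w => ∑ e₁, ∑ e₃, c2 e₁ e.1 e₃ * mon (w ⟨0, by decide⟩) e₁ * mon (w ⟨2, by decide⟩) e₃,
        fun v => by simp [sl]⟩
    · exact ⟨2, fun x => mon x e.1,
        fun w => ∑ e₁, ∑ e₂, c3 e₁ e₂ e.1 * mon (w ⟨0, by decide⟩) e₁ * mon (w ⟨1, by decide⟩) e₂,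
        fun v => by simp [sl]⟩
  have hfull : ∀ (f : E → F), (∀ e, ¬ low e → f e = 0) → ∑ e : M, f e.1 = ∑ e, f e := by
    intro f hf
    rw [← Finset.sum_subset (Finset.subset_univ (Finset.univ.filter low))
      (fun x _ hx => hf x (by simpa using hx))]
    exact (Finset.sum_subtype _ (by simp) f).symm
  have hmain : ∀ v : Fin 3 → X, P (v 0) (v 1) (v 2) = ∑ k, sl (ι.symm k) v := by
    intro v
    have h1 : ∑ k, sl (ι.symm k) v = ∑ p : Fin 3 × M, sl p v :=
      Equiv.sum_comp ι.symm (fun p => sl p v)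
    rw [h1, Fintype.sum_prod_type, Fin.sum_univ_three]
    have g1 : ∑ e : M, sl (0, e) v =
        ∑ e₁, ∑ e₂, ∑ e₃, c1 e₁ e₂ e₃ * mon (v 0) e₁ * mon (v 1) e₂ * mon (v 2) e₃ := by
      have hv : ∀ e : E, ¬ low e →
          mon (v 0) e * (∑ e₂, ∑ e₃, c1 e e₂ e₃ * mon (v 1) e₂ * mon (v 2) e₃) = 0 := by
        intro e he
        have h0 : ∀ e₂ e₃ : E, c1 e e₂ e₃ = 0 := fun _ _ => if_neg he
        simp [h0]
      calc ∑ e : M, sl (0, e) v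
          = ∑ e : E, mon (v 0) e * (∑ e₂, ∑ e₃, c1 e e₂ e₃ * mon (v 1) e₂ * mon (v 2) e₃) :=
            hfull _ hv
        _ = _ := by
            refine Finset.sum_congr rfl fun e₁ _ => ?_
            rw [Finset.mul_sum]
            refine Finset.sum_congr rfl fun e₂ _ => ?_
            rw [Finset.mul_sum]
            refine Finset.sum_congr rfl fun e₃ _ => ?_
            ring
    have g2 : ∑ e : M, sl (1, e) v =
        ∑ e₁, ∑ e₂, ∑ e₃, c2 e₁ e₂ e₃ * mon (v 0) e₁ * mon (v 1) e₂ * mon (v 2) e₃ := by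
      have hv : ∀ e : E, ¬ low e →
          mon (v 1) e * (∑ e₁, ∑ e₃, c2 e₁ e e₃ * mon (v 0) e₁ * mon (v 2) e₃) = 0 := by
        intro e he
        have h0 : ∀ e₁ e₃ : E, c2 e₁ e e₃ = 0 := fun _ _ => by simp [c2, he]
        simp [h0]
      calc ∑ e : M, sl (1, e) v
          = ∑ e : E, mon (v 1) e * (∑ e₁, ∑ e₃, c2 e₁ e e₃ * mon (v 0) e₁ * mon (v 2) e₃) :=
            hfull _ hv
        _ = ∑ e₂ : E, ∑ e₁ : E, ∑ e₃ : E,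
              c2 e₁ e₂ e₃ * mon (v 0) e₁ * mon (v 1) e₂ * mon (v 2) e₃ := by
            refine Finset.sum_congr rfl fun e₂ _ => ?_
            rw [Finset.mul_sum]
            refine Finset.sum_congr rfl fun e₁ _ => ?_
            rw [Finset.mul_sum]
            refine Finset.sum_congr rfl fun e₃ _ => ?_
            ring
        _ = _ := Finset.sum_comm
    have g3 : ∑ e : M, sl (2, e) v =
        ∑ e₁, ∑ e₂, ∑ e₃, c3 e₁ e₂ e₃ * mon (v 0) e₁ * mon (v 1) e₂ * mon (v 2) e₃ := by
      have hv : ∀ e : E, ¬ low e →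
          mon (v 2) e * (∑ e₁, ∑ e₂, c3 e₁ e₂ e * mon (v 0) e₁ * mon (v 1) e₂) = 0 := by
        intro e he
        have h0 : ∀ e₁ e₂ : E, c3 e₁ e₂ e = 0 := fun e₁ e₂ => hc3low e₁ e₂ e he
        simp [h0]
      calc ∑ e : M, sl (2, e) v
          = ∑ e : E, mon (v 2) e * (∑ e₁, ∑ e₂, c3 e₁ e₂ e * mon (v 0) e₁ * mon (v 1) e₂) :=
            hfull _ hv
        _ = ∑ e₃ : E, ∑ e₁ : E, ∑ e₂ : E,
              c3 e₁ e₂ e₃ * mon (v 0) e₁ * mon (v 1) e₂ * mon (v 2) e₃ := by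
            refine Finset.sum_congr rfl fun e₃ _ => ?_
            rw [Finset.mul_sum]
            refine Finset.sum_congr rfl fun e₁ _ => ?_
            rw [Finset.mul_sum]
            refine Finset.sum_congr rfl fun e₂ _ => ?_
            ring
        _ = ∑ e₁ : E, ∑ e₃ : E, ∑ e₂ : E,
              c3 e₁ e₂ e₃ * mon (v 0) e₁ * mon (v 1) e₂ * mon (v 2) e₃ := Finset.sum_comm
        _ = _ := Finset.sum_congr rfl fun e₁ _ => Finset.sum_comm
    rw [g1, g2, g3, hP]
    simp only [← Finset.sum_add_distrib]
    refine Finset.sum_congr rfl fun e₁ _ => ?_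
    refine Finset.sum_congr rfl fun e₂ _ => ?_
    refine Finset.sum_congr rfl fun e₃ _ => ?_
    rw [hsplit e₁ e₂ e₃]
    ring
  apply Nat.sInf_le
  exact ⟨fun k => sl (ι.symm k), fun k => hslice _, fun v => hmain v⟩
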